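/- arXiv:0808.2521 — 3 statements merged into one kernel-verified Lean document; each statement's English description precedes it below -/
import Mathlib

section
/- For any two Hermitian matrices A and B of order k, the Kolmogorov (sup-norm) distance between their empirical spectral distribution functions satisfies ||F_A - F_B||_∞ ≤ rank(A - B)/k. -/
/-!
Fix `x` and let `S` be spanned by the eigenvectors of `A` with eigenvalue `≤ x`, and `S'` by those
of `B` with eigenvalue `> x`. For `v ∈ S ⊓ S'` with `v ≠ 0` the Rayleigh quotients satisfy
`re ⟪v, A v⟫ ≤ x ‖v‖² < re ⟪v, B v⟫`, so `S ⊓ S'` meets `ker (A - B)` trivially. Counting dimensions,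
`#{λᵢ(A) ≤ x} + #{λᵢ(B) > x} ≤ k + rank (A - B)`, that is `k F_A(x) ≤ k F_B(x) + rank (A - B)`;
exchanging `A` and `B` gives the bound on `|F_A(x) - F_B(x)|`.
-/

open scoped Classical
open Matrix Finset

/-- Empirical spectral distribution function of a Hermitian matrix. -/
noncomputable def esd {m : Type*} [Fintype m] [DecidableEq m] {A : Matrix m m ℂ}
    (hA : A.IsHermitian) (x : ℝ) : ℝ :=
  ((Finset.univ.filter fun i => hA.eigenvalues i ≤ x).card : ℝ) / Fintype.card m

open scoped InnerProductSpace
open Module Submodule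

theorem Submodule.finrank_add_finrank_le_of_disjoint_inf_ker {K V W : Type*} [DivisionRing K]
    [AddCommGroup V] [Module K V] [AddCommGroup W] [Module K W] [FiniteDimensional K V]
    {s t : Submodule K V} {f : V →ₗ[K] W} (h : Disjoint (s ⊓ t) (LinearMap.ker f)) :
    finrank K s + finrank K t ≤ finrank K V + finrank K (LinearMap.range f) := by
  have h_sup_inf := finrank_sup_add_finrank_inf_eq s t
  have h_sup_le := (s ⊔ t).finrank_le
  have h_inf_ker := finrank_add_finrank_le_of_disjoint h
  have h_rank_nullity := f.finrank_range_add_finrank_ker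
  omega

namespace OrthonormalBasis

variable {ι 𝕜 E : Type*} [Fintype ι] [RCLike 𝕜] [NormedAddCommGroup E] [InnerProductSpace 𝕜 E]
  (b : OrthonormalBasis ι 𝕜 E)

theorem inner_eq_zero_of_mem_span_image {s : Set ι} {v : E} (hv : v ∈ span 𝕜 (b '' s))
    {i : ι} (hi : i ∉ s) : ⟪b i, v⟫_𝕜 = 0 := by
  rw [← b.coe_toBasis, Basis.mem_span_image] at hv
  rw [← b.repr_apply_apply, ← b.coe_toBasis_repr_apply]
  exact Finsupp.notMem_support_iff.mp fun h => hi (hv h)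

theorem finrank_span_image_setOf (p : ι → Prop) [DecidablePred p] :
    finrank 𝕜 (span 𝕜 (b '' {i | p i})) = #{i | p i} := by
  rw [← coe_filter_univ, Set.image_eq_range]
  exact (finrank_span_eq_card (b.orthonormal.linearIndependent.comp _ Subtype.coe_injective)).trans
    (Fintype.card_coe _)

variable {b} {T : E →ₗ[𝕜] E} {μ : ι → ℝ}

theorem re_inner_apply_eq_sum (hT : ∀ i, T (b i) = (μ i : 𝕜) • b i) (v : E) :
    RCLike.re ⟪v, T v⟫_𝕜 = ∑ i, μ i * ‖⟪b i, v⟫_𝕜‖ ^ 2 := by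
  have hTv : T v = ∑ i, (⟪b i, v⟫_𝕜 * μ i) • b i := by
    conv_lhs => rw [← b.sum_repr' v]
    simp only [map_sum, map_smul, hT, smul_smul]
  rw [hTv, inner_sum, map_sum]
  refine sum_congr rfl fun i _ => ?_
  rw [inner_smul_right, ← inner_conj_symm v (b i), mul_right_comm, RCLike.mul_conj]
  norm_cast
  exact mul_comm _ _

theorem re_inner_apply_le_of_mem_span (hT : ∀ i, T (b i) = (μ i : 𝕜) • b i) {x : ℝ} {v : E}
    (hv : v ∈ span 𝕜 (b '' {i | μ i ≤ x})) : RCLike.re ⟪v, T v⟫_𝕜 ≤ x * ‖v‖ ^ 2 := by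
  rw [re_inner_apply_eq_sum hT, ← b.sum_sq_norm_inner_right, mul_sum]
  refine sum_le_sum fun i _ => ?_
  by_cases hi : μ i ≤ x
  · gcongr
  · simp [b.inner_eq_zero_of_mem_span_image hv hi]

theorem lt_re_inner_apply_of_mem_span (hT : ∀ i, T (b i) = (μ i : 𝕜) • b i) {x : ℝ} {v : E}
    (hv : v ∈ span 𝕜 (b '' {i | x < μ i})) (hv0 : v ≠ 0) :
    x * ‖v‖ ^ 2 < RCLike.re ⟪v, T v⟫_𝕜 := by
  rw [re_inner_apply_eq_sum hT, ← b.sum_sq_norm_inner_right, mul_sum]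
  obtain ⟨j, hj⟩ : ∃ j, ⟪b j, v⟫_𝕜 ≠ 0 := by
    by_contra! h
    exact hv0 (by simpa [h] using (b.sum_repr' v).symm)
  have hμj : x < μ j := by
    by_contra h
    exact hj (b.inner_eq_zero_of_mem_span_image hv h)
  refine sum_lt_sum (fun i _ => ?_) ⟨j, mem_univ j, by gcongr⟩
  by_cases hi : x < μ i
  · gcongr
  · simp [b.inner_eq_zero_of_mem_span_image hv hi]

end OrthonormalBasis

open OrthonormalBasis in
theorem LinearMap.card_le_card_add_finrank_range_sub {ι 𝕜 E : Type*} [Fintype ι] [RCLike 𝕜]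
    [NormedAddCommGroup E] [InnerProductSpace 𝕜 E] {b c : OrthonormalBasis ι 𝕜 E}
    {T U : E →ₗ[𝕜] E} {μ ν : ι → ℝ} (hT : ∀ i, T (b i) = (μ i : 𝕜) • b i)
    (hU : ∀ i, U (c i) = (ν i : 𝕜) • c i) (x : ℝ) :
    #{i | μ i ≤ x} ≤ #{i | ν i ≤ x} + finrank 𝕜 (range (T - U)) := by
  have := b.toBasis.finiteDimensional_of_finite
  have hdisj : Disjoint (span 𝕜 (b '' {i | μ i ≤ x}) ⊓ span 𝕜 (c '' {i | x < ν i}))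
      (ker (T - U)) := by
    rw [Submodule.disjoint_def]
    rintro v ⟨hvb, hvc⟩ hv
    by_contra hv0
    have hTU : T v = U v := sub_eq_zero.mp hv
    have hle := re_inner_apply_le_of_mem_span hT hvb
    have hlt := lt_re_inner_apply_of_mem_span hU hvc hv0
    rw [hTU] at hle
    linarith
  have hdim := finrank_add_finrank_le_of_disjoint_inf_ker hdisj
  rw [b.finrank_span_image_setOf, c.finrank_span_image_setOf, finrank_eq_card_basis b.toBasis]
    at hdim
  have hsplit := card_filter_add_card_filter_not (s := univ) (fun i => ν i ≤ x)
  simp only [not_le, card_univ] at hsplit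
  omega

namespace Matrix

theorem rank_neg {R m n : Type*} [CommRing R] [Fintype n] (M : Matrix m n R) :
    (-M).rank = M.rank := by
  have : (-M).mulVecLin = -M.mulVecLin := LinearMap.ext fun v => neg_mulVec v M
  rw [rank, rank, this, LinearMap.range_neg]

theorem rank_sub_comm {R m n : Type*} [CommRing R] [Fintype n] (M N : Matrix m n R) :
    (M - N).rank = (N - M).rank := by
  rw [← neg_sub, rank_neg]

variable {𝕜 n : Type*} [RCLike 𝕜] [Fintype n] [DecidableEq n] {A B : Matrix n n 𝕜}

theorem rank_eq_finrank_range_toEuclideanLin (M : Matrix n n 𝕜) :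
    M.rank = finrank 𝕜 (LinearMap.range (toEuclideanLin M)) := by
  rw [rank_eq_finrank_range_toLin M (EuclideanSpace.basisFun n 𝕜).toBasis
    (EuclideanSpace.basisFun n 𝕜).toBasis, ← toEuclideanLin_eq_toLin_orthonormal]

namespace IsHermitian

theorem toEuclideanLin_eigenvectorBasis (hA : A.IsHermitian) (i : n) :
    toEuclideanLin A (hA.eigenvectorBasis i) = (hA.eigenvalues i : 𝕜) • hA.eigenvectorBasis i := by
  ext j
  simp only [toLpLin_apply, PiLp.toLp_apply, PiLp.smul_apply, hA.mulVec_eigenvectorBasis]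
  simp [RCLike.real_smul_eq_coe_smul (K := 𝕜)]

theorem card_eigenvalues_le_le_card_add_rank (hA : A.IsHermitian) (hB : B.IsHermitian) (x : ℝ) :
    #{i | hA.eigenvalues i ≤ x} ≤ #{i | hB.eigenvalues i ≤ x} + (A - B).rank := by
  rw [rank_eq_finrank_range_toEuclideanLin, map_sub]
  exact LinearMap.card_le_card_add_finrank_range_sub hA.toEuclideanLin_eigenvectorBasis
    hB.toEuclideanLin_eigenvectorBasis x

end IsHermitian

end Matrix

theorem abs_esd_sub_esd_le {m : Type*} [Fintype m] [DecidableEq m] {A B : Matrix m m ℂ}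
    (hA : A.IsHermitian) (hB : B.IsHermitian) (x : ℝ) :
    |esd hA x - esd hB x| ≤ (A - B).rank / Fintype.card m := by
  have hAB := hA.card_eigenvalues_le_le_card_add_rank hB x
  have hBA := hB.card_eigenvalues_le_le_card_add_rank hA x
  rw [← rank_sub_comm] at hBA
  rw [esd, esd, div_sub_div_same, abs_div, Nat.abs_cast]
  gcongr
  rw [abs_sub_le_iff, sub_le_iff_le_add', sub_le_iff_le_add']
  exact ⟨mod_cast hAB, mod_cast hBA⟩

theorem sup_dist_esd_le_rank_div_general {k : ℕ}
    (A B : Matrix (Fin k) (Fin k) ℂ) (hA : A.IsHermitian) (hB : B.IsHermitian) :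
    ⨆ x : ℝ, |esd hA x - esd hB x| ≤ ((A - B).rank : ℝ) / k :=
  ciSup_le fun x => by simpa using abs_esd_sub_esd_le hA hB x

/-- For any two Hermitian matrices `A, B` of order `k`,
`‖F_A - F_B‖_∞ ≤ rank (A - B) / k`. -/
theorem sup_dist_esd_le_rank_div {k : ℕ} (hk : 0 < k)
    (A B : Matrix (Fin k) (Fin k) ℂ) (hA : A.IsHermitian) (hB : B.IsHermitian) :
    ⨆ x : ℝ, |esd hA x - esd hB x| ≤ ((A - B).rank : ℝ) / k :=
  sup_dist_esd_le_rank_div_general A B hA hB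
end

section
/- For any two k×n complex matrices A and B, the sup-norm distance between the empirical distribution functions of the eigenvalues of AA* and BB* satisfies ||F_{AA*} - F_{BB*}||_∞ ≤ rank(A - B)/k. -/
/-!
Write `N(M, x)` for the number of eigenvalues of a Hermitian `M` that are at most `x`. In the
eigenbasis of `M` the quadratic form is `∑ λᵢ |wᵢ|²`, so `N(M, x)` is the largest dimension of a
subspace on which `v ↦ ⟪v, M v⟫ ≤ x ‖v‖²`. The forms of `AA*` and `BB*` are `‖A* v‖²` and `‖B* v‖²`,
which agree on `ker (A - B)*`, a subspace of codimension `rank (A - B)`. Intersecting a maximal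
such subspace for `BB*` with this kernel gives `N(BB*, x) ≤ N(AA*, x) + rank (A - B)`, and
symmetrically.
-/

open scoped Classical
open Matrix Finset

open Module LinearMap RCLike

namespace Matrix

variable {𝕜 : Type*} [RCLike 𝕜] {n : Type*} [Fintype n]

lemma star_dotProduct_self_eq_sum_norm_sq (w : n → 𝕜) :
    star w ⬝ᵥ w = ∑ i, ((‖w i‖ ^ 2 : ℝ) : 𝕜) := by
  simp only [dotProduct, Pi.star_apply, RCLike.star_def, RCLike.conj_mul, ofReal_pow]

lemma star_mulVec_dotProduct_mulVec_of_mem_unitaryGroup [DecidableEq n] {U : Matrix n n 𝕜}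
    (hU : U ∈ unitaryGroup n 𝕜) (w : n → 𝕜) : star (U *ᵥ w) ⬝ᵥ (U *ᵥ w) = star w ⬝ᵥ w := by
  rw [star_mulVec, ← dotProduct_mulVec, mulVec_mulVec, ← star_eq_conjTranspose,
    Unitary.star_mul_self_of_mem hU, one_mulVec]

lemma star_dotProduct_mul_conjTranspose_mulVec {l : Type*} [Fintype l] (A : Matrix n l 𝕜)
    (v : n → 𝕜) : star v ⬝ᵥ ((A * Aᴴ) *ᵥ v) = star (Aᴴ *ᵥ v) ⬝ᵥ (Aᴴ *ᵥ v) := by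
  rw [← mulVec_mulVec, dotProduct_mulVec, star_mulVec, conjTranspose_conjTranspose]

namespace IsHermitian

variable [DecidableEq n] {M : Matrix n n 𝕜} (hM : M.IsHermitian)

lemma star_dotProduct_mulVec_eigenvectorUnitary_mulVec (w : n → 𝕜) :
    star ((hM.eigenvectorUnitary : Matrix n n 𝕜) *ᵥ w) ⬝ᵥ
        (M *ᵥ ((hM.eigenvectorUnitary : Matrix n n 𝕜) *ᵥ w)) =
      ∑ i, (hM.eigenvalues i : 𝕜) * ((‖w i‖ ^ 2 : ℝ) : 𝕜) := by
  have hdiag := hM.conjStarAlgAut_star_eigenvectorUnitary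
  rw [Unitary.conjStarAlgAut_apply, Unitary.coe_star, star_star] at hdiag
  rw [star_mulVec, ← dotProduct_mulVec, mulVec_mulVec, mulVec_mulVec, ← star_eq_conjTranspose,
    hdiag]
  simp only [dotProduct, mulVec_diagonal, Function.comp_apply, Pi.star_apply, RCLike.star_def,
    ← RCLike.conj_mul, ofReal_pow]
  exact Finset.sum_congr rfl fun i _ ↦ by ring

lemma re_star_dotProduct_mulVec_eigenvectorUnitary_mulVec_sub (x : ℝ) (w : n → 𝕜) :
    re (star ((hM.eigenvectorUnitary : Matrix n n 𝕜) *ᵥ w) ⬝ᵥ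
        (M *ᵥ ((hM.eigenvectorUnitary : Matrix n n 𝕜) *ᵥ w))) -
      x * re (star ((hM.eigenvectorUnitary : Matrix n n 𝕜) *ᵥ w) ⬝ᵥ
        ((hM.eigenvectorUnitary : Matrix n n 𝕜) *ᵥ w)) =
      ∑ i, (hM.eigenvalues i - x) * ‖w i‖ ^ 2 := by
  rw [hM.star_dotProduct_mulVec_eigenvectorUnitary_mulVec,
    star_mulVec_dotProduct_mulVec_of_mem_unitaryGroup hM.eigenvectorUnitary.2,
    star_dotProduct_self_eq_sum_norm_sq]
  simp only [map_sum, ← ofReal_mul, ofReal_re, Finset.mul_sum, ← Finset.sum_sub_distrib, sub_mul]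

theorem finrank_le_card_eigenvalues_le {x : ℝ} (W : Submodule 𝕜 (n → 𝕜))
    (hW : ∀ v ∈ W, re (star v ⬝ᵥ (M *ᵥ v)) ≤ x * re (star v ⬝ᵥ v)) :
    finrank 𝕜 W ≤ #{i | hM.eigenvalues i ≤ x} := by
  set U := hM.eigenvectorUnitary
  let f : W →ₗ[𝕜] {i // hM.eigenvalues i ≤ x} → 𝕜 :=
    funLeft 𝕜 𝕜 Subtype.val ∘ₗ (UnitaryGroup.toLinearEquiv U).symm.toLinearMap ∘ₗ W.subtype
  have hf : Function.Injective f := by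
    rw [← LinearMap.ker_eq_bot, Submodule.eq_bot_iff]
    intro v hv
    set w := star (U : Matrix n n 𝕜) *ᵥ v
    have hUw : (U : Matrix n n 𝕜) *ᵥ w = v := by
      rw [mulVec_mulVec, Unitary.mul_star_self_of_mem U.2, one_mulVec]
    have hw_low : ∀ i, hM.eigenvalues i ≤ x → w i = 0 := fun i hi ↦ congrFun hv ⟨i, hi⟩
    have hsum : ∑ i, (hM.eigenvalues i - x) * ‖w i‖ ^ 2 ≤ 0 := by
      rw [← hM.re_star_dotProduct_mulVec_eigenvectorUnitary_mulVec_sub, hUw, sub_nonpos]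
      exact hW v v.2
    have hterm : ∀ i ∈ univ, 0 ≤ (hM.eigenvalues i - x) * ‖w i‖ ^ 2 := fun i _ ↦ by
      by_cases hi : hM.eigenvalues i ≤ x
      · simp [hw_low i hi]
      · exact mul_nonneg (by linarith) (by positivity)
    have hw : w = 0 := funext fun i ↦ by
      by_cases hi : hM.eigenvalues i ≤ x
      · exact hw_low i hi
      · have := (sum_eq_zero_iff_of_nonneg hterm).1 (le_antisymm hsum (sum_nonneg hterm)) i
          (mem_univ i)
        simpa [sub_eq_zero, (ne_of_gt (not_le.1 hi))] using this
    ext1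
    rw [← hUw, hw, mulVec_zero]
    rfl
  calc finrank 𝕜 W ≤ finrank 𝕜 ({i // hM.eigenvalues i ≤ x} → 𝕜) :=
        finrank_le_finrank_of_injective hf
    _ = #{i | hM.eigenvalues i ≤ x} := by
        rw [finrank_fintype_fun_eq_card, Fintype.card_subtype]

theorem exists_finrank_eq_card_eigenvalues_le (x : ℝ) :
    ∃ V : Submodule 𝕜 (n → 𝕜), finrank 𝕜 V = #{i | hM.eigenvalues i ≤ x} ∧
      ∀ v ∈ V, re (star v ⬝ᵥ (M *ᵥ v)) ≤ x * re (star v ⬝ᵥ v) := by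
  let Z : Submodule 𝕜 (n → 𝕜) := ⨅ i ∈ {i | x < hM.eigenvalues i}, ker (proj i)
  have hZ : Z ≃ₗ[𝕜] ({i | hM.eigenvalues i ≤ x} → 𝕜) :=
    iInfKerProjEquiv 𝕜 (fun _ ↦ 𝕜)
      (Set.disjoint_left.2 fun i (hi : hM.eigenvalues i ≤ x) ↦ hi.not_gt)
      fun i _ ↦ le_or_gt (hM.eigenvalues i) x
  refine ⟨Z.map (UnitaryGroup.toLinearEquiv hM.eigenvectorUnitary : (n → 𝕜) →ₗ[𝕜] n → 𝕜),
    ?_, ?_⟩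
  · rw [LinearEquiv.finrank_map_eq, hZ.finrank_eq, finrank_fintype_fun_eq_card,
      Fintype.card_subtype]
    simp only [Set.mem_ofPred_eq]
  · rintro _ ⟨w, hw, rfl⟩
    have hw_high : ∀ i, x < hM.eigenvalues i → w i = 0 := by simpa [Z] using hw
    rw [← sub_nonpos]
    refine (hM.re_star_dotProduct_mulVec_eigenvectorUnitary_mulVec_sub x w).le.trans
      (sum_nonpos fun i _ ↦ ?_)
    rcases le_or_gt (hM.eigenvalues i) x with hi | hi
    · exact mul_nonpos_of_nonpos_of_nonneg (sub_nonpos.2 hi) (by positivity)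
    · simp [hw_high i hi]

end IsHermitian

theorem card_eigenvalues_le_le_add_finrank_range [DecidableEq n] {M N : Matrix n n 𝕜}
    (hM : M.IsHermitian) (hN : N.IsHermitian) {F : Type*} [AddCommGroup F] [Module 𝕜 F]
    (L : (n → 𝕜) →ₗ[𝕜] F) (hMN : ∀ v ∈ ker L, star v ⬝ᵥ (M *ᵥ v) = star v ⬝ᵥ (N *ᵥ v))
    (x : ℝ) : #{i | hN.eigenvalues i ≤ x} ≤ #{i | hM.eigenvalues i ≤ x} + finrank 𝕜 (range L) := by
  obtain ⟨V, hV_finrank, hV⟩ := hN.exists_finrank_eq_card_eigenvalues_le x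
  have h_inf := hM.finrank_le_card_eigenvalues_le (V ⊓ ker L) fun v hv ↦ by
    rw [hMN v hv.2]
    exact hV v hv.1
  have h_sup := (V ⊔ ker L).finrank_le
  have := Submodule.finrank_sup_add_finrank_inf_eq V (ker L)
  have := L.finrank_range_add_finrank_ker
  omega

theorem abs_sub_card_eigenvalues_le_finrank_range [DecidableEq n] {M N : Matrix n n 𝕜}
    (hM : M.IsHermitian) (hN : N.IsHermitian) {F : Type*} [AddCommGroup F] [Module 𝕜 F]
    (L : (n → 𝕜) →ₗ[𝕜] F) (hMN : ∀ v ∈ ker L, star v ⬝ᵥ (M *ᵥ v) = star v ⬝ᵥ (N *ᵥ v))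
    (x : ℝ) :
    |(#{i | hM.eigenvalues i ≤ x} : ℝ) - #{i | hN.eigenvalues i ≤ x}| ≤ finrank 𝕜 (range L) := by
  have h₁ := card_eigenvalues_le_le_add_finrank_range hM hN L hMN x
  have h₂ := card_eigenvalues_le_le_add_finrank_range hN hM L (fun v hv ↦ (hMN v hv).symm) x
  rw [abs_sub_le_iff, sub_le_iff_le_add, sub_le_iff_le_add]
  exact ⟨mod_cast h₂.trans_eq (add_comm _ _), mod_cast h₁.trans_eq (add_comm _ _)⟩

open scoped ComplexOrder in
theorem abs_sub_card_eigenvalues_mul_conjTranspose_le_rank [DecidableEq n] {l : Type*}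
    [Fintype l] (A B : Matrix n l 𝕜) (x : ℝ) :
    |(#{i | (isHermitian_mul_conjTranspose_self A).eigenvalues i ≤ x} : ℝ) -
        #{i | (isHermitian_mul_conjTranspose_self B).eigenvalues i ≤ x}| ≤ (A - B).rank := by
  have hker : ∀ v ∈ ker (mulVecLin (A - B)ᴴ),
      star v ⬝ᵥ ((A * Aᴴ) *ᵥ v) = star v ⬝ᵥ ((B * Bᴴ) *ᵥ v) := fun v hv ↦ by
    rw [mem_ker, mulVecLin_apply, conjTranspose_sub, sub_mulVec, sub_eq_zero] at hv
    rw [star_dotProduct_mul_conjTranspose_mulVec, star_dotProduct_mul_conjTranspose_mulVec, hv]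
  rw [← rank_conjTranspose]
  exact abs_sub_card_eigenvalues_le_finrank_range _ _ _ hker x

end Matrix

theorem sup_dist_esd_mul_conjTranspose_le_rank_div_general {k n : ℕ}
    (A B : Matrix (Fin k) (Fin n) ℂ) :
    ⨆ x : ℝ, |esd (Matrix.isHermitian_mul_conjTranspose_self A) x -
        esd (Matrix.isHermitian_mul_conjTranspose_self B) x| ≤ ((A - B).rank : ℝ) / k := by
  refine ciSup_le fun x ↦ ?_
  rw [esd, esd, Fintype.card_fin, ← sub_div, abs_div, Nat.abs_cast]
  exact div_le_div_of_nonneg_right (abs_sub_card_eigenvalues_mul_conjTranspose_le_rank A B x)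
    k.cast_nonneg

/-- For any two `k × n` complex matrices `A, B`,
`‖F_{AA*} - F_{BB*}‖_∞ ≤ rank (A - B) / k`. -/
theorem sup_dist_esd_mul_conjTranspose_le_rank_div {k n : ℕ} (hk : 0 < k)
    (A B : Matrix (Fin k) (Fin n) ℂ) :
    ⨆ x : ℝ, |esd (Matrix.isHermitian_mul_conjTranspose_self A) x -
        esd (Matrix.isHermitian_mul_conjTranspose_self B) x| ≤ ((A - B).rank : ℝ) / k :=
  sup_dist_esd_mul_conjTranspose_le_rank_div_general A B
end

section
/- Let (Π,μ) be a reversible Markov chain on a finite set X with spectral gap λ₁ > 0. If f : X → ℝ satisfies (1/2)·sup_x Σ_y (f(x)-f(y))² Π(x,y) ≤ 1, then for every r ≥ 0, μ({x : f(x) ≥ ∫f dμ + r}) ≤ 3·exp(−r√λ₁/2). -/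
/-!
Herbst's argument with the Poincaré inequality in place of a log-Sobolev inequality. Write
`L(t) = ∫ e^{t f} dμ`. Applying the spectral gap to `g = e^{t f / 2}` and bounding the Dirichlet
form of `g` through `(e^{a/2} - e^{b/2})² ≤ (a - b)²(e^a + e^b)/4`, reversibility and
`|||f|||_∞ ≤ 1` gives `λ₁ (L(t) - L(t/2)²) ≤ t² L(t) / 2`. For `t ≤ √λ₁ / 2` this becomes
`log L(t) ≤ 2 log L(t/2) + 4t²/(7λ₁)`; iterating along `t/2ⁿ` and using
`2ⁿ log L(t/2ⁿ) → t ∫ f dμ` yields `L(√λ₁/2) ≤ e^{2/7} e^{(√λ₁/2) ∫ f dμ}`, and Chebyshev's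
exponential inequality finishes, since `e^{2/7} ≤ 3`.
-/

open Finset Filter Topology Real

lemma sq_exp_half_sub_exp_half_le (a b : ℝ) :
    (exp (a / 2) - exp (b / 2)) ^ 2 ≤ (a - b) ^ 2 / 4 * (exp a + exp b) := by
  wlog hba : b ≤ a generalizing a b
  · linarith [this b a (le_of_not_ge hba)]
  have hmvt : exp (a / 2) - exp (b / 2) ≤ (a - b) / 2 * exp (a / 2) := by
    have hsplit : exp (b / 2) = exp (a / 2) * exp ((b - a) / 2) := by
      rw [← exp_add]; ring_nf
    nlinarith [add_one_le_exp ((b - a) / 2), exp_pos (a / 2)]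
  have hnonneg : 0 ≤ exp (a / 2) - exp (b / 2) := sub_nonneg.2 (exp_le_exp.2 (by linarith))
  have hsq : exp (a / 2) ^ 2 = exp a := by rw [sq, ← exp_add]; ring_nf
  nlinarith [exp_pos b, exp_pos (a / 2), sq_nonneg ((a - b) / 2 * exp (a / 2))]

lemma log_le_two_mul_log_add_of_mul_sub_sq_le {a b lam t : ℝ} (ha : 0 < a) (hb : 0 < b)
    (hlam : 0 < lam) (ht : t ^ 2 ≤ lam / 4) (h : lam * (a - b ^ 2) ≤ t ^ 2 / 2 * a) :
    log a ≤ 2 * log b + 4 / (7 * lam) * t ^ 2 := by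
  have hden : 0 < lam - t ^ 2 / 2 := by linarith [sq_nonneg t]
  have hratio : 0 < lam / (lam - t ^ 2 / 2) := div_pos hlam hden
  have hab : a ≤ b ^ 2 * (lam / (lam - t ^ 2 / 2)) := by
    rw [mul_div_assoc', le_div_iff₀ hden]
    linarith
  have hlog_ratio : log (lam / (lam - t ^ 2 / 2)) ≤ 4 / (7 * lam) * t ^ 2 := by
    refine (log_le_sub_one_of_pos hratio).trans ?_
    rw [div_sub_one hden.ne', div_mul_eq_mul_div, div_le_div_iff₀ hden (by positivity)]
    nlinarith [sq_nonneg t]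
  calc log a ≤ log (b ^ 2 * (lam / (lam - t ^ 2 / 2))) := log_le_log ha hab
    _ = 2 * log b + log (lam / (lam - t ^ 2 / 2)) := by
        rw [log_mul (by positivity) hratio.ne', log_pow]
        norm_num
    _ ≤ 2 * log b + 4 / (7 * lam) * t ^ 2 := by linarith

lemma le_two_pow_mul_div_two_pow_add {G : ℝ → ℝ} {c s : ℝ} (hs : 0 < s)
    (hrec : ∀ t, 0 < t → t ≤ s → G t ≤ 2 * G (t / 2) + c * t ^ 2) (n : ℕ) :
    G s ≤ 2 ^ n * G (s / 2 ^ n) + c * s ^ 2 * ∑ k ∈ range n, (1 / 2 : ℝ) ^ k := by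
  induction n with
  | zero => simp
  | succ n ih =>
    have hstep := hrec (s / 2 ^ n) (by positivity)
      (div_le_self hs.le (one_le_pow₀ (by norm_num)))
    have hscale : 2 ^ n * (2 * G (s / 2 ^ n / 2) + c * (s / 2 ^ n) ^ 2)
        = 2 ^ (n + 1) * G (s / 2 ^ (n + 1)) + c * s ^ 2 * (1 / 2 : ℝ) ^ n := by
      rw [div_div, ← pow_succ, one_div_pow]
      field_simp
      ring
    rw [sum_range_succ]
    nlinarith [mul_le_mul_of_nonneg_left hstep (by positivity : (0 : ℝ) ≤ 2 ^ n)]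

lemma tendsto_two_pow_mul_div_two_pow {G : ℝ → ℝ} {m s : ℝ} (hs : s ≠ 0) (h0 : G 0 = 0)
    (hG : HasDerivAt G m 0) :
    Tendsto (fun n : ℕ => 2 ^ n * G (s / 2 ^ n)) atTop (𝓝 (s * m)) := by
  have hseq : Tendsto (fun n : ℕ => s / 2 ^ n) atTop (𝓝[≠] 0) := by
    refine tendsto_nhdsWithin_iff.2 ⟨?_, Eventually.of_forall fun n => by simp [hs]⟩
    simpa [div_eq_mul_inv] using
      (tendsto_inv_atTop_zero.comp (tendsto_pow_atTop_atTop_of_one_lt one_lt_two)).const_mul s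
  refine ((hG.tendsto_slope_zero.comp hseq).const_mul s).congr fun n => ?_
  simp only [Function.comp_apply, zero_add, h0, sub_zero, smul_eq_mul]
  field_simp

lemma le_mul_add_of_le_two_mul_half_add {G : ℝ → ℝ} {c m s : ℝ} (hs : 0 < s) (hc : 0 ≤ c)
    (h0 : G 0 = 0) (hG : HasDerivAt G m 0)
    (hrec : ∀ t, 0 < t → t ≤ s → G t ≤ 2 * G (t / 2) + c * t ^ 2) :
    G s ≤ s * m + 2 * c * s ^ 2 := by
  refine ge_of_tendsto' ((tendsto_two_pow_mul_div_two_pow hs.ne' h0 hG).add_const _) fun n => ?_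
  have hgeom := mul_le_mul_of_nonneg_left (sum_geometric_two_le n)
    (by positivity : 0 ≤ c * s ^ 2)
  linarith [le_two_pow_mul_div_two_pow_add hs hrec n]

noncomputable section

namespace MarkovChain

variable {X : Type*} [Fintype X]

def variance (μ g : X → ℝ) : ℝ :=
  ∑ x, (g x - ∑ y, μ y * g y) ^ 2 * μ x

def dirichletForm (P : X → X → ℝ) (μ g : X → ℝ) : ℝ :=
  (1 / 2) * ∑ x, ∑ y, (g x - g y) ^ 2 * P x y * μ x

def PoincareInequality (P : X → X → ℝ) (μ : X → ℝ) (lam : ℝ) : Prop :=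
  ∀ g : X → ℝ, lam * variance μ g ≤ dirichletForm P μ g

def expMoment (μ f : X → ℝ) (t : ℝ) : ℝ :=
  ∑ x, μ x * exp (t * f x)

lemma variance_eq_sum_mul_sq_sub_sq {μ : X → ℝ} (hμ1 : ∑ x, μ x = 1) (g : X → ℝ) :
    variance μ g = ∑ x, μ x * g x ^ 2 - (∑ y, μ y * g y) ^ 2 := by
  set m := ∑ y, μ y * g y
  have expand : ∀ x, (g x - m) ^ 2 * μ x = μ x * g x ^ 2 - 2 * m * (μ x * g x) + m ^ 2 * μ x :=
    fun x => by ring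
  rw [variance, sum_congr rfl fun x _ => expand x, sum_add_distrib, sum_sub_distrib, ← mul_sum,
    ← mul_sum, hμ1]
  ring

lemma sum_sum_mul_swap_of_reversible {P : X → X → ℝ} {μ : X → ℝ}
    (hrev : ∀ x y, P x y * μ x = P y x * μ y) (φ : X → X → ℝ) :
    ∑ x, ∑ y, φ x y * P x y * μ x = ∑ x, ∑ y, φ y x * P x y * μ x := by
  rw [sum_comm]
  refine sum_congr rfl fun y _ => sum_congr rfl fun x _ => ?_
  rw [mul_assoc, mul_assoc, hrev]

lemma expMoment_pos {μ : X → ℝ} (hμ : ∀ x, 0 ≤ μ x) (hμ1 : ∑ x, μ x = 1) (f : X → ℝ) (t : ℝ) :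
    0 < expMoment μ f t := by
  obtain ⟨x₀, -, hx₀⟩ : ∃ x ∈ univ, (0 : ℝ) < μ x :=
    exists_lt_of_sum_lt (by simp [hμ1])
  exact sum_pos' (fun x _ => mul_nonneg (hμ x) (exp_pos _).le)
    ⟨x₀, mem_univ _, mul_pos hx₀ (exp_pos _)⟩

lemma expMoment_zero {μ : X → ℝ} (hμ1 : ∑ x, μ x = 1) (f : X → ℝ) : expMoment μ f 0 = 1 := by
  simp [expMoment, hμ1]

lemma hasDerivAt_log_expMoment_zero {μ : X → ℝ} (hμ1 : ∑ x, μ x = 1) (f : X → ℝ) :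
    HasDerivAt (fun t => log (expMoment μ f t)) (∑ x, μ x * f x) 0 := by
  have hL : HasDerivAt (expMoment μ f) (∑ x, μ x * f x) 0 := by
    have hterm : ∀ x ∈ univ, HasDerivAt (fun t => μ x * exp (t * f x)) (μ x * f x) 0 :=
      fun x _ => by simpa using (hasDerivAt_mul_const (x := (0 : ℝ)) (f x)).exp.const_mul (μ x)
    exact HasDerivAt.fun_sum hterm
  simpa [expMoment_zero hμ1] using hL.log (by simp [expMoment_zero hμ1])

lemma dirichletForm_exp_half_le {P : X → X → ℝ} {μ f : X → ℝ} (hP : ∀ x y, 0 ≤ P x y)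
    (hμ : ∀ x, 0 ≤ μ x) (hrev : ∀ x y, P x y * μ x = P y x * μ y)
    (hf : ∀ x, (1 / 2) * ∑ y, (f x - f y) ^ 2 * P x y ≤ 1) (t : ℝ) :
    dirichletForm P μ (fun x => exp (t * f x / 2)) ≤ t ^ 2 / 2 * expMoment μ f t := by
  set w : X → X → ℝ := fun x y => t ^ 2 * (f x - f y) ^ 2 / 4 * exp (t * f x)
  have hpoint : ∀ x y, (exp (t * f x / 2) - exp (t * f y / 2)) ^ 2 ≤ w x y + w y x := fun x y => by
    have := sq_exp_half_sub_exp_half_le (t * f x) (t * f y)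
    simp only [w]
    convert this using 1
    ring
  calc dirichletForm P μ (fun x => exp (t * f x / 2))
      ≤ (1 / 2) * ∑ x, ∑ y, (w x y + w y x) * P x y * μ x := by
        unfold dirichletForm
        gcongr with x _ y _
        · exact hμ x
        · exact hP x y
        · exact hpoint x y
    _ = ∑ x, ∑ y, w x y * P x y * μ x := by
        simp only [add_mul, sum_add_distrib]
        rw [← sum_sum_mul_swap_of_reversible hrev w]
        ring
    _ = ∑ x, t ^ 2 / 2 * (μ x * exp (t * f x)) * ((1 / 2) * ∑ y, (f x - f y) ^ 2 * P x y) := by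
        refine sum_congr rfl fun x _ => ?_
        rw [mul_sum, mul_sum]
        exact sum_congr rfl fun y _ => by ring
    _ ≤ ∑ x, t ^ 2 / 2 * (μ x * exp (t * f x)) * 1 := by
        gcongr with x _
        · exact mul_nonneg (by positivity) (mul_nonneg (hμ x) (exp_pos _).le)
        · exact hf x
    _ = t ^ 2 / 2 * expMoment μ f t := by
        rw [expMoment, mul_sum]
        simp only [mul_one]

lemma expMoment_sub_sq_le {P : X → X → ℝ} {μ f : X → ℝ} {lam : ℝ} (hP : ∀ x y, 0 ≤ P x y)
    (hμ : ∀ x, 0 ≤ μ x) (hμ1 : ∑ x, μ x = 1) (hrev : ∀ x y, P x y * μ x = P y x * μ y)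
    (hgap : PoincareInequality P μ lam) (hf : ∀ x, (1 / 2) * ∑ y, (f x - f y) ^ 2 * P x y ≤ 1)
    (t : ℝ) :
    lam * (expMoment μ f t - expMoment μ f (t / 2) ^ 2) ≤ t ^ 2 / 2 * expMoment μ f t := by
  set g : X → ℝ := fun x => exp (t * f x / 2)
  have hmean : ∑ y, μ y * g y = expMoment μ f (t / 2) :=
    sum_congr rfl fun y _ => by simp only [g]; ring_nf
  have hsq : ∑ x, μ x * g x ^ 2 = expMoment μ f t :=
    sum_congr rfl fun x _ => by simp only [g]; rw [sq, ← exp_add]; ring_nf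
  have := (hgap g).trans (dirichletForm_exp_half_le hP hμ hrev hf t)
  rwa [variance_eq_sum_mul_sq_sub_sq hμ1, hsq, hmean] at this

lemma sum_filter_le_exp_mul_expMoment {μ : X → ℝ} (hμ : ∀ x, 0 ≤ μ x) (f : X → ℝ) (a : ℝ)
    {s : ℝ} (hs : 0 ≤ s) :
    ∑ x ∈ univ.filter (fun x => a ≤ f x), μ x ≤ exp (-(s * a)) * expMoment μ f s := by
  calc ∑ x ∈ univ.filter (fun x => a ≤ f x), μ x
      ≤ ∑ x ∈ univ.filter (fun x => a ≤ f x), μ x * exp (s * (f x - a)) := by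
        refine sum_le_sum fun x hx => le_mul_of_one_le_right (hμ x) (one_le_exp ?_)
        exact mul_nonneg hs (sub_nonneg.2 (mem_filter.1 hx).2)
    _ ≤ ∑ x, μ x * exp (s * (f x - a)) :=
        sum_le_sum_of_subset_of_nonneg (filter_subset _ _)
          fun x _ _ => mul_nonneg (hμ x) (exp_pos _).le
    _ = exp (-(s * a)) * expMoment μ f s := by
        rw [expMoment, mul_sum]
        refine sum_congr rfl fun x _ => ?_
        rw [mul_sub, sub_eq_add_neg, exp_add]
        ring

theorem log_expMoment_le_of_poincare {P : X → X → ℝ} {μ f : X → ℝ} {lam : ℝ} (hP : ∀ x y, 0 ≤ P x y)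
    (hμ : ∀ x, 0 ≤ μ x) (hμ1 : ∑ x, μ x = 1) (hrev : ∀ x y, P x y * μ x = P y x * μ y)
    (hlam : 0 < lam) (hgap : PoincareInequality P μ lam)
    (hf : ∀ x, (1 / 2) * ∑ y, (f x - f y) ^ 2 * P x y ≤ 1) {s : ℝ} (hs : 0 < s)
    (hs2 : s ^ 2 ≤ lam / 4) :
    log (expMoment μ f s) ≤ s * ∑ x, μ x * f x + 2 * (4 / (7 * lam)) * s ^ 2 := by
  refine le_mul_add_of_le_two_mul_half_add (G := fun t => log (expMoment μ f t)) hs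
    (by positivity) (by simp [expMoment_zero hμ1]) (hasDerivAt_log_expMoment_zero hμ1 f)
    fun t ht hts => ?_
  exact log_le_two_mul_log_add_of_mul_sub_sq_le (expMoment_pos hμ hμ1 f t)
    (expMoment_pos hμ hμ1 f _) hlam (by nlinarith) (expMoment_sub_sq_le hP hμ hμ1 hrev hgap hf t)

end MarkovChain

end

open MarkovChain in
theorem markov_chain_concentration_general {X : Type*} [Fintype X]
    (P : X → X → ℝ) (μ : X → ℝ)
    (hP : ∀ x y, 0 ≤ P x y)
    (hμ : ∀ x, 0 ≤ μ x) (hμ1 : ∑ x, μ x = 1)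
    (hrev : ∀ x y, P x y * μ x = P y x * μ y)
    (lam : ℝ) (hlam : 0 < lam)
    (hgap : ∀ g : X → ℝ,
      lam * ∑ x, (g x - ∑ y, μ y * g y) ^ 2 * μ x ≤
        (1 / 2) * ∑ x, ∑ y, (g x - g y) ^ 2 * P x y * μ x)
    (f : X → ℝ)
    (hf : ∀ x, (1 / 2) * ∑ y, (f x - f y) ^ 2 * P x y ≤ 1)
    (r : ℝ) :
    ∑ x ∈ Finset.univ.filter (fun x => (∑ y, μ y * f y) + r ≤ f x), μ x ≤
      3 * Real.exp (-r * Real.sqrt lam / 2) := by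
  set s := √lam / 2
  have hs : 0 < s := by positivity
  have hs2 : s ^ 2 = lam / 4 := by rw [div_pow, sq_sqrt hlam.le]; norm_num
  have hmoment : expMoment μ f s ≤ exp (s * ∑ y, μ y * f y + 2 / 7) := by
    rw [← log_le_iff_le_exp (expMoment_pos hμ hμ1 f s)]
    convert log_expMoment_le_of_poincare hP hμ hμ1 hrev hlam hgap hf hs hs2.le using 2
    rw [hs2]
    field_simp
  have hexp : exp (2 / 7) ≤ 3 :=
    (exp_le_exp.2 (by norm_num)).trans (exp_one_lt_three.le : exp 1 ≤ 3)
  calc _ ≤ exp (-(s * ((∑ y, μ y * f y) + r))) * expMoment μ f s :=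
        sum_filter_le_exp_mul_expMoment hμ f _ hs.le
    _ ≤ exp (-(s * ((∑ y, μ y * f y) + r))) * exp (s * ∑ y, μ y * f y + 2 / 7) := by gcongr
    _ = exp (2 / 7) * exp (-r * √lam / 2) := by
        rw [← exp_add, ← exp_add]
        congr 1
        ring
    _ ≤ 3 * exp (-r * √lam / 2) := by gcongr

/-- Ledoux's concentration inequality for reversible Markov chains with a spectral gap:
if `(Π, μ)` is reversible with spectral gap `λ₁ > 0` and `|||f|||_∞ ≤ 1`, then
`μ(f ≥ ∫ f dμ + r) ≤ 3 exp(-r √λ₁ / 2)`. -/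
theorem markov_chain_concentration {X : Type*} [Fintype X] [Nonempty X]
    (P : X → X → ℝ) (μ : X → ℝ)
    (hP : ∀ x y, 0 ≤ P x y) (hrow : ∀ x, ∑ y, P x y = 1)
    (hμ : ∀ x, 0 ≤ μ x) (hμ1 : ∑ x, μ x = 1)
    (hrev : ∀ x y, P x y * μ x = P y x * μ y)
    (lam : ℝ) (hlam : 0 < lam)
    (hgap : ∀ g : X → ℝ,
      lam * ∑ x, (g x - ∑ y, μ y * g y) ^ 2 * μ x ≤
        (1 / 2) * ∑ x, ∑ y, (g x - g y) ^ 2 * P x y * μ x)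
    (hlargest : ∀ lam' : ℝ,
      (∀ g : X → ℝ,
        lam' * ∑ x, (g x - ∑ y, μ y * g y) ^ 2 * μ x ≤
          (1 / 2) * ∑ x, ∑ y, (g x - g y) ^ 2 * P x y * μ x) → lam' ≤ lam)
    (f : X → ℝ)
    (hf : ∀ x, (1 / 2) * ∑ y, (f x - f y) ^ 2 * P x y ≤ 1)
    (r : ℝ) (hr : 0 ≤ r) :
    ∑ x ∈ Finset.univ.filter (fun x => (∑ y, μ y * f y) + r ≤ f x), μ x ≤
      3 * Real.exp (-r * Real.sqrt lam / 2) :=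
  markov_chain_concentration_general P μ hP hμ hμ1 hrev lam hlam hgap f hf r
end
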